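/- For a = α e_1 with α > 0 and b = α_4 e_4 + α_5 e_5 + α_6 e_6 with (α_4,α_5,α_6) ≠ 0 not collinear with (α,0,0), if x = y = 0 (where x + iy = (1/2)√(α² − β² + 2iαα_4), β = |(α_4,α_5,α_6)|), then the matrix exp(a+b)·exp(−b) is Hermitian if and only if tan(β/2) = β/2. -/

import Mathlib

open Matrix

noncomputable def e1 : Matrix (Fin 2) (Fin 2) ℂ := (2 : ℂ)⁻¹ • !![0, 1; 1, 0]
noncomputable def e2 : Matrix (Fin 2) (Fin 2) ℂ :=
  (2 : ℂ)⁻¹ • !![0, Complex.I; -Complex.I, 0]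
noncomputable def e3 : Matrix (Fin 2) (Fin 2) ℂ := (2 : ℂ)⁻¹ • !![1, 0; 0, -1]
noncomputable def e4 : Matrix (Fin 2) (Fin 2) ℂ := Complex.I • e1
noncomputable def e5 : Matrix (Fin 2) (Fin 2) ℂ := Complex.I • e2
noncomputable def e6 : Matrix (Fin 2) (Fin 2) ℂ := Complex.I • e3

/-!
With `α4 = 0` the matrices `e1, e5, e6` pairwise anticommute and square to `1/4, -1/4, -1/4`, so
`(a + b)² = (α² - β²)/4 = 0` and `exp (a + b) = 1 + a + b`, while `b² = -(β/2)²` gives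
`exp (-b) = cos (β/2) - (sin (β/2) / (β/2)) b`. As `a` is Hermitian, `b` skew-Hermitian and
`a b = -b a`, the skew-Hermitian part of the product is `(cos (β/2) - sin (β/2) / (β/2)) b`,
which vanishes iff `tan (β/2) = β/2`.
-/

namespace NormedSpace

theorem exp_eq_one_add_of_mul_self_eq_zero {A : Type*} [Ring A] [Algebra ℚ A]
    [TopologicalSpace A] [IsTopologicalRing A] {x : A} (hx : x * x = 0) :
    exp x = 1 + x := by
  have hpow : ∀ n, 2 ≤ n → x ^ n = 0 := fun n hn => by
    obtain ⟨m, rfl⟩ := Nat.exists_eq_add_of_le hn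
    rw [pow_add, sq, hx, zero_mul]
  rw [congrFun exp_eq_tsum_rat x, tsum_eq_sum (s := {0, 1}) fun n hn => by
    rw [hpow n (by simp at hn; omega), smul_zero]]
  simp

theorem exp_eq_cos_smul_one_add_sin_div_smul {A : Type*} [NormedRing A] [NormedAlgebra ℝ A]
    [CompleteSpace A] {x : A} {θ : ℝ} (hθ : θ ≠ 0) (hx : x * x = -(θ ^ 2 • 1)) :
    exp x = Real.cos θ • 1 + (Real.sin θ / θ) • x := by
  set u := θ⁻¹ • x
  have hu : u * u = -1 := by
    rw [smul_mul_smul_comm, hx, smul_neg, smul_smul]; field_simp; simp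
  let _ : Algebra ℚ A := Algebra.compHom A (algebraMap ℚ ℝ)
  -- `exp` commutes with the continuous embedding `ℂ →ₐ[ℝ] A` sending `I` to `u`
  let f := Complex.liftAux u hu
  have hfθ : f (θ * Complex.I) = x := by simp [f, u, hθ]
  rw [← hfθ, ← map_exp f f.toLinearMap.continuous_of_finiteDimensional,
    ← Complex.exp_eq_exp_ℂ, Complex.exp_mul_I]
  simp [f, u, ← Complex.ofReal_cos, ← Complex.ofReal_sin, Algebra.algebraMap_eq_smul_one,
    smul_smul, div_eq_mul_inv, hθ]

end NormedSpace

theorem isSelfAdjoint_one_add_add_mul_smul_one_add_smul_iff {A : Type*} [Ring A] [StarRing A]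
    [Algebra ℝ A] [StarModule ℝ A] {a b : A} (ha : IsSelfAdjoint a) (hb : star b = -b)
    (hab : a * b = -(b * a)) (c s : ℝ) :
    IsSelfAdjoint ((1 + a + b) * (c • 1 + s • b)) ↔ (c + s) • b = 0 := by
  have hstar : star ((1 + a + b) * (c • 1 + s • b)) =
      (1 + a + b) * (c • 1 + s • b) - (2 * (c + s)) • b := by
    simp only [star_mul, star_add, star_smul, star_one, ha.star_eq, hb, star_trivial]
    simp only [mul_add, add_mul, mul_smul_comm, smul_mul_assoc, mul_one, one_mul, mul_neg,
      neg_mul, hab]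
    module
  rw [IsSelfAdjoint, hstar, sub_eq_self, mul_smul, smul_eq_zero]
  norm_num

theorem Real.cos_eq_sin_div_iff_tan_eq {θ : ℝ} (hθ : θ ≠ 0) :
    Real.cos θ = Real.sin θ / θ ↔ Real.tan θ = θ := by
  rw [Real.tan_eq_sin_div_cos]
  by_cases hc : Real.cos θ = 0
  · have hs : Real.sin θ ≠ 0 := by
      intro hs; simpa [hs, hc] using Real.sin_sq_add_cos_sq θ
    rw [hc, div_zero]
    exact iff_of_false (div_ne_zero hs hθ).symm (Ne.symm hθ)
  · rw [eq_div_iff hθ, div_eq_iff hc, eq_comm, mul_comm]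

theorem smul_e1_add_smul_e5_add_smul_e6_mul_self (r p q : ℂ) :
    (r • e1 + p • e5 + q • e6) * (r • e1 + p • e5 + q • e6) =
      ((r ^ 2 - p ^ 2 - q ^ 2) / 4) • 1 := by
  ext i j
  fin_cases i <;> fin_cases j <;>
    simp [e1, e2, e3, e5, e6, Matrix.mul_apply, Fin.sum_univ_two] <;> ring_nf <;>
    simp [Complex.I_sq] <;> ring

theorem e1_mul_smul_e5_add_smul_e6 (p q : ℂ) :
    e1 * (p • e5 + q • e6) = -((p • e5 + q • e6) * e1) := by
  ext i j
  fin_cases i <;> fin_cases j <;> simp [e1, e2, e3, e5, e6, Matrix.mul_apply, Fin.sum_univ_two] <;>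
    ring

theorem star_e1 : star e1 = e1 := by
  ext i j
  fin_cases i <;> fin_cases j <;> simp [e1]

theorem star_e5 : star e5 = -e5 := by
  ext i j
  fin_cases i <;> fin_cases j <;> simp [e5, e2]

theorem star_e6 : star e6 = -e6 := by
  ext i j
  fin_cases i <;> fin_cases j <;> simp [e6, e3]

section RealCoefficients

variable (r p q : ℝ)

theorem isSelfAdjoint_ofReal_smul_e1 : IsSelfAdjoint ((r : ℂ) • e1) := by
  simp [IsSelfAdjoint, star_smul, star_e1]

theorem star_ofReal_smul_e5_add_ofReal_smul_e6 :
    star ((p : ℂ) • e5 + (q : ℂ) • e6) = -((p : ℂ) • e5 + (q : ℂ) • e6) := by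
  simp [star_smul, star_e5, star_e6, add_comm]

theorem ofReal_smul_e1_mul_smul_e5_add_smul_e6 :
    (r : ℂ) • e1 * ((p : ℂ) • e5 + (q : ℂ) • e6) =
      -(((p : ℂ) • e5 + (q : ℂ) • e6) * (r : ℂ) • e1) := by
  rw [smul_mul_assoc, e1_mul_smul_e5_add_smul_e6, mul_smul_comm, smul_neg]

theorem ofReal_smul_e5_add_ofReal_smul_e6_mul_self :
    ((p : ℂ) • e5 + (q : ℂ) • e6) * ((p : ℂ) • e5 + (q : ℂ) • e6) =
      -(((p ^ 2 + q ^ 2) / 4 : ℝ) • 1) := by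
  have h := smul_e1_add_smul_e5_add_smul_e6_mul_self 0 p q
  rw [zero_smul, zero_add] at h
  rw [h, ← neg_smul, ← Complex.coe_smul]
  push_cast
  ring_nf

theorem ofReal_smul_e5_add_ofReal_smul_e6_ne_zero (hpq : p ^ 2 + q ^ 2 ≠ 0) :
    (p : ℂ) • e5 + (q : ℂ) • e6 ≠ 0 := fun h => by
  have hsq := ofReal_smul_e5_add_ofReal_smul_e6_mul_self p q
  rw [h, zero_mul, eq_comm, neg_eq_zero, smul_eq_zero] at hsq
  simp [hpq] at hsq

theorem exp_neg_ofReal_smul_e5_add_ofReal_smul_e6 {θ : ℝ} (hθ : θ ≠ 0)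
    (hpq : p ^ 2 + q ^ 2 = θ ^ 2) :
    NormedSpace.exp (-((p : ℂ) • e5 + (q : ℂ) • e6)) =
      Real.cos (θ / 2) • 1 +
        (-(Real.sin (θ / 2) / (θ / 2))) • ((p : ℂ) • e5 + (q : ℂ) • e6) := by
  let _ := Matrix.linftyOpNormedRing (n := Fin 2) (α := ℂ)
  let _ := Matrix.linftyOpNormedAlgebra (R := ℝ) (n := Fin 2) (α := ℂ)
  have h := NormedSpace.exp_eq_cos_smul_one_add_sin_div_smul
    (x := -((p : ℂ) • e5 + (q : ℂ) • e6)) (θ := θ / 2) (by positivity) (by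
      rw [neg_mul_neg, ofReal_smul_e5_add_ofReal_smul_e6_mul_self, hpq]; ring_nf)
  rwa [smul_neg, ← neg_smul] at h

end RealCoefficients

theorem stmt15_general (α α4 α5 α6 β : ℝ) (hα : 0 < α)
    (hβ : β = Real.sqrt (α4 ^ 2 + α5 ^ 2 + α6 ^ 2))
    (hx : α ^ 2 = β ^ 2) (hy : α4 = 0)
    (a b : Matrix (Fin 2) (Fin 2) ℂ)
    (ha : a = (α : ℂ) • e1)
    (hb : b = (α4 : ℂ) • e4 + (α5 : ℂ) • e5 + (α6 : ℂ) • e6) :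
    (NormedSpace.exp (a + b) * NormedSpace.exp (-b)).IsHermitian ↔
      Real.tan (β / 2) = β / 2 := by
  subst ha hb hy
  rw [Complex.ofReal_zero, zero_smul, zero_add]
  have hβ_sq : α5 ^ 2 + α6 ^ 2 = β ^ 2 := by
    rw [hβ, Real.sq_sqrt (by positivity)]; ring
  have hβ_pos : 0 < β :=
    (pow_left_inj₀ hα.le (hβ ▸ Real.sqrt_nonneg _) two_ne_zero).mp hx ▸ hα
  set v := (α5 : ℂ) • e5 + (α6 : ℂ) • e6
  have hnil : ((α : ℂ) • e1 + v) * ((α : ℂ) • e1 + v) = 0 := by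
    rw [← add_assoc, smul_e1_add_smul_e5_add_smul_e6_mul_self, sub_sub]
    norm_cast
    simp [hβ_sq, hx]
  have hv_ne : v ≠ 0 :=
    ofReal_smul_e5_add_ofReal_smul_e6_ne_zero α5 α6 (by rw [hβ_sq]; positivity)
  rw [NormedSpace.exp_eq_one_add_of_mul_self_eq_zero hnil,
    exp_neg_ofReal_smul_e5_add_ofReal_smul_e6 α5 α6 hβ_pos.ne' hβ_sq, ← add_assoc,
    isHermitian_iff_isSelfAdjoint,
    isSelfAdjoint_one_add_add_mul_smul_one_add_smul_iff (isSelfAdjoint_ofReal_smul_e1 α)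
      (star_ofReal_smul_e5_add_ofReal_smul_e6 α5 α6)
      (ofReal_smul_e1_mul_smul_e5_add_smul_e6 α α5 α6),
    smul_eq_zero, or_iff_left hv_ne, ← sub_eq_add_neg, sub_eq_zero]
  exact Real.cos_eq_sin_div_iff_tan_eq (by positivity)

theorem stmt15 (α α4 α5 α6 β : ℝ) (hα : 0 < α)
    (hβ : β = Real.sqrt (α4 ^ 2 + α5 ^ 2 + α6 ^ 2))
    (hne : ¬(α4 = 0 ∧ α5 = 0 ∧ α6 = 0))
    (hncol : ¬∃ a : ℝ, α4 = a * α ∧ α5 = 0 ∧ α6 = 0)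
    (hx : α ^ 2 = β ^ 2) (hy : α4 = 0)
    (a b : Matrix (Fin 2) (Fin 2) ℂ)
    (ha : a = (α : ℂ) • e1)
    (hb : b = (α4 : ℂ) • e4 + (α5 : ℂ) • e5 + (α6 : ℂ) • e6) :
    (NormedSpace.exp (a + b) * NormedSpace.exp (-b)).IsHermitian ↔
      Real.tan (β / 2) = β / 2 :=
  stmt15_general α α4 α5 α6 β hα hβ hx hy a b ha hb
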